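/- Let f, g, h be trajectories such that every pair among them overlaps and such that a_h ≤ a_f ≤ a_g and b_f ≤ b_h ≤ b_g. Then d_c(f,g) ≤ d_c(f,h) + d_c(h,g). -/
import Mathlib


open MeasureTheory Set

/-- The ℓ_p norm on ℝ^r. -/
noncomputable def lpNorm (r : ℕ) (p : ℝ) (x : Fin r → ℝ) : ℝ :=
  (∑ i, |x i| ^ p) ^ (1 / p)

/-- The ℓ_p distance between two trajectory segments aligned on [t₁, t₂]. -/
noncomputable def segDist (r : ℕ) (p : ℝ) (t₁ t₂ : ℝ) (f g : ℝ → Fin r → ℝ) : ℝ :=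
  ∫ t in t₁..t₂, lpNorm r p (fun i => f t i - g t i)

/-- A trajectory: a function ℝ → ℝ^r together with an interval [a, b] (a ≤ b)
on which it is continuous. -/
structure Traj (r : ℕ) where
  f : ℝ → Fin r → ℝ
  a : ℝ
  b : ℝ
  hab : a ≤ b
  cont : ContinuousOn f (Set.Icc a b)

/-- Two trajectories overlap if their time domains intersect. -/
def Overlap {r : ℕ} (F G : Traj r) : Prop := max F.a G.a ≤ min F.b G.b

/-- The pairwise spatio-temporal trajectory distance with segment cutoff
coefficient cS (equal FA and MD cutoffs). -/
noncomputable def dC (r : ℕ) (p cS : ℝ) (F G : Traj r) : ℝ :=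
  ((r : ℝ) * (cS * (|F.a - G.a| + |F.b - G.b|)) ^ p +
    min ((segDist r p (max F.a G.a) (min F.b G.b) F.f G.f) ^ p)
        ((r : ℝ) * (2 * cS * (min F.b G.b - max F.a G.a)) ^ p)) ^ (1 / p)

namespace DCAux

lemma lpNorm_nonneg (r : ℕ) (p : ℝ) (x : Fin r → ℝ) : 0 ≤ lpNorm r p x :=
  Real.rpow_nonneg (Finset.sum_nonneg fun i _ => Real.rpow_nonneg (abs_nonneg _) _) _

lemma continuous_lpNorm (r : ℕ) {p : ℝ} (hp : 1 ≤ p) : Continuous (lpNorm r p) := by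
  have hp0 : (0:ℝ) ≤ p := le_trans zero_le_one hp
  have h1 : Continuous fun x : Fin r → ℝ => ∑ i, |x i| ^ p := by
    apply continuous_finset_sum
    intro i _hi
    exact (Real.continuous_rpow_const hp0).comp (continuous_apply i).abs
  exact (Real.continuous_rpow_const (by positivity)).comp h1

lemma lpNorm_add_le (r : ℕ) {p : ℝ} (hp : 1 ≤ p) (x y : Fin r → ℝ) :
    lpNorm r p (fun i => x i + y i) ≤ lpNorm r p x + lpNorm r p y := by
  have hp0 : (0:ℝ) < p := lt_of_lt_of_le zero_lt_one hp
  have h1 : lpNorm r p (fun i => x i + y i)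
      ≤ (∑ i, (|x i| + |y i|) ^ p) ^ (1 / p) := by
    apply Real.rpow_le_rpow
    · exact Finset.sum_nonneg fun i _ => Real.rpow_nonneg (abs_nonneg _) _
    · exact Finset.sum_le_sum fun i _ =>
        Real.rpow_le_rpow (abs_nonneg _) (abs_add_le _ _) hp0.le
    · positivity
  exact h1.trans (Real.Lp_add_le_of_nonneg (s := Finset.univ) (f := fun i => |x i|)
    (g := fun i => |y i|) hp (fun i _ => abs_nonneg _) fun i _ => abs_nonneg _)

lemma two_lp {p : ℝ} (hp : 1 ≤ p) {u v u1 v1 u2 v2 : ℝ}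
    (hu : 0 ≤ u) (hv : 0 ≤ v) (hu1 : 0 ≤ u1) (hv1 : 0 ≤ v1) (hu2 : 0 ≤ u2) (hv2 : 0 ≤ v2)
    (h1 : u ≤ u1 + u2) (h2 : v ≤ v1 + v2) :
    (u ^ p + v ^ p) ^ (1 / p) ≤ (u1 ^ p + v1 ^ p) ^ (1 / p) + (u2 ^ p + v2 ^ p) ^ (1 / p) := by
  have hp0 : (0:ℝ) < p := lt_of_lt_of_le zero_lt_one hp
  have key := Real.Lp_add_le_of_nonneg (s := (Finset.univ : Finset (Fin 2)))
    (f := ![u1, v1]) (g := ![u2, v2]) hp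
    (by intro i _; fin_cases i <;> simpa) (by intro i _; fin_cases i <;> simpa)
  simp only [Fin.sum_univ_two, Matrix.cons_val_zero, Matrix.cons_val_one, Matrix.head_cons] at key
  refine le_trans ?_ key
  apply Real.rpow_le_rpow
  · positivity
  · exact add_le_add (Real.rpow_le_rpow hu h1 hp0.le) (Real.rpow_le_rpow hv h2 hp0.le)
  · positivity

lemma min_add_min {a c a1 c1 a2 c2 : ℝ}
    (ha1 : 0 ≤ a1) (hc1 : 0 ≤ c1) (ha2 : 0 ≤ a2) (hc2 : 0 ≤ c2)
    (h : a ≤ a1 + a2) (h1 : c ≤ c1) (h2 : c ≤ c2) :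
    min a c ≤ min a1 c1 + min a2 c2 := by
  rcases le_total a1 c1 with hx | hx
  · rcases le_total a2 c2 with hy | hy
    · rw [min_eq_left hx, min_eq_left hy]
      exact le_trans (min_le_left _ _) h
    · rw [min_eq_right hy]
      calc min a c ≤ c := min_le_right _ _
        _ ≤ c2 := h2
        _ ≤ min a1 c1 + c2 := le_add_of_nonneg_left (le_min ha1 hc1)
  · rw [min_eq_right hx]
    calc min a c ≤ c := min_le_right _ _
      _ ≤ c1 := h1
      _ ≤ c1 + min a2 c2 := le_add_of_nonneg_right (le_min ha2 hc2)

lemma min_rpow {a b p : ℝ} (ha : 0 ≤ a) (hb : 0 ≤ b) (hp : 0 ≤ p) :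
    (min a b) ^ p = min (a ^ p) (b ^ p) := by
  rcases le_total a b with h | h
  · rw [min_eq_left h, min_eq_left (Real.rpow_le_rpow ha h hp)]
  · rw [min_eq_right h, min_eq_right (Real.rpow_le_rpow hb h hp)]

lemma rpow_inv_mul {r : ℕ} {p w : ℝ} (hp : 0 < p) (hw : 0 ≤ w) :
    ((r : ℝ) ^ (1 / p) * w) ^ p = (r : ℝ) * w ^ p := by
  rw [Real.mul_rpow (Real.rpow_nonneg (Nat.cast_nonneg r) _) hw,
    ← Real.rpow_mul (Nat.cast_nonneg r), one_div_mul_cancel hp.ne', Real.rpow_one]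

lemma segDist_nonneg {r : ℕ} {p t₁ t₂ : ℝ} (h : t₁ ≤ t₂) (f g : ℝ → Fin r → ℝ) :
    0 ≤ segDist r p t₁ t₂ f g :=
  intervalIntegral.integral_nonneg h fun _ _ => lpNorm_nonneg _ _ _

/-- Rewriting `dC` as an explicit `ℓ_p` norm of a nonnegative 2-vector. -/
lemma dC_eq {r : ℕ} {p : ℝ} (hp : 1 ≤ p) {cS : ℝ} (hcS : 0 ≤ cS)
    (F G : Traj r) (hov : Overlap F G) :
    dC r p cS F G =
      (((r : ℝ) ^ (1 / p) * (cS * (|F.a - G.a| + |F.b - G.b|))) ^ p +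
        (min (segDist r p (max F.a G.a) (min F.b G.b) F.f G.f)
          ((r : ℝ) ^ (1 / p) * (2 * cS * (min F.b G.b - max F.a G.a)))) ^ p) ^ (1 / p) := by
  have hp0 : (0:ℝ) < p := lt_of_lt_of_le zero_lt_one hp
  have hL : (0:ℝ) ≤ min F.b G.b - max F.a G.a := sub_nonneg.mpr hov
  rw [dC, rpow_inv_mul hp0 (by positivity),
    min_rpow (segDist_nonneg hov _ _) (by positivity) hp0.le,
    rpow_inv_mul hp0 (by positivity)]

lemma integrable_seg {r : ℕ} {p : ℝ} (hp : 1 ≤ p) {f g : ℝ → Fin r → ℝ} {a b : ℝ}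
    (hab : a ≤ b) (hf : ContinuousOn f (Icc a b)) (hg : ContinuousOn g (Icc a b)) :
    IntervalIntegrable (fun t => lpNorm r p (fun i => f t i - g t i)) volume a b := by
  apply ContinuousOn.intervalIntegrable
  rw [Set.uIcc_of_le hab]
  apply (continuous_lpNorm r hp).comp_continuousOn
  exact continuousOn_pi.mpr fun i =>
    ((continuous_apply i).comp_continuousOn hf).sub ((continuous_apply i).comp_continuousOn hg)

end DCAux

open DCAux in
/-- Triangle-type inequality for the pairwise trajectory distance under the
endpoint ordering of this case. -/
theorem dC_tri_case3 (r : ℕ) (hr : 1 ≤ r) (p : ℝ) (hp : 1 ≤ p)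
    (cS : ℝ) (hcS : 0 < cS)
    (F G H : Traj r) (hFG : Overlap F G) (hFH : Overlap F H) (hHG : Overlap H G)
    (ha1 : H.a ≤ F.a) (ha2 : F.a ≤ G.a) (hb1 : F.b ≤ H.b) (hb2 : H.b ≤ G.b) :
    dC r p cS F G ≤ dC r p cS F H + dC r p cS H G := by
  have hp0 : (0:ℝ) < p := lt_of_lt_of_le zero_lt_one hp
  -- simplify the max/min endpoints
  have hbFG : F.b ≤ G.b := hb1.trans hb2
  have haHG : H.a ≤ G.a := ha1.trans ha2
  have e1 : max F.a G.a = G.a := max_eq_right ha2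
  have e2 : min F.b G.b = F.b := min_eq_left hbFG
  have e3 : max F.a H.a = F.a := max_eq_left ha1
  have e4 : min F.b H.b = F.b := min_eq_left hb1
  have e5 : max H.a G.a = G.a := max_eq_right haHG
  have e6 : min H.b G.b = H.b := min_eq_left hb2
  have hGaFb : G.a ≤ F.b := by
    have := hFG; rw [Overlap, e1, e2] at this; exact this
  have hGaHb : G.a ≤ H.b := hGaFb.trans hb1
  rw [dC_eq hp hcS.le F G hFG, dC_eq hp hcS.le F H hFH, dC_eq hp hcS.le H G hHG,
    e1, e2, e3, e4, e5, e6]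
  -- integrability facts
  have hFc : ContinuousOn F.f (Icc G.a F.b) :=
    F.cont.mono (Icc_subset_Icc ha2 le_rfl)
  have hGc : ContinuousOn G.f (Icc G.a F.b) :=
    G.cont.mono (Icc_subset_Icc le_rfl hbFG)
  have hHc : ContinuousOn H.f (Icc G.a F.b) :=
    H.cont.mono (Icc_subset_Icc haHG hb1)
  have iFG := integrable_seg hp hGaFb hFc hGc
  have iFH := integrable_seg hp hGaFb hFc hHc
  have iHG := integrable_seg hp hGaFb hHc hGc
  have iFH' := integrable_seg (f := F.f) (g := H.f) hp F.hab
    F.cont (H.cont.mono (Icc_subset_Icc ha1 hb1))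
  have iHG' := integrable_seg (f := H.f) (g := G.f) hp hGaHb
    (H.cont.mono (Icc_subset_Icc haHG le_rfl))
    (G.cont.mono (Icc_subset_Icc le_rfl hb2))
  -- segment distance triangle inequality
  have hseg : segDist r p G.a F.b F.f G.f ≤
      segDist r p F.a F.b F.f H.f + segDist r p G.a H.b H.f G.f := by
    have step1 : segDist r p G.a F.b F.f G.f ≤
        segDist r p G.a F.b F.f H.f + segDist r p G.a F.b H.f G.f := by
      rw [segDist, segDist, segDist, ← intervalIntegral.integral_add iFH iHG]
      apply intervalIntegral.integral_mono_on hGaFb iFG (iFH.add iHG)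
      intro t _
      have : (fun i => F.f t i - G.f t i)
          = fun i => (F.f t i - H.f t i) + (H.f t i - G.f t i) := by
        funext i; ring
      rw [this]
      exact lpNorm_add_le r hp _ _
    have step2 : segDist r p G.a F.b F.f H.f ≤ segDist r p F.a F.b F.f H.f :=
      intervalIntegral.integral_mono_interval ha2 hGaFb le_rfl
        (Filter.Eventually.of_forall fun t => lpNorm_nonneg _ _ _) iFH'
    have step3 : segDist r p G.a F.b H.f G.f ≤ segDist r p G.a H.b H.f G.f :=
      intervalIntegral.integral_mono_interval le_rfl hGaFb hb1
        (Filter.Eventually.of_forall fun t => lpNorm_nonneg _ _ _) iHG'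
    linarith
  -- cutoff inequalities
  have hrp : (0:ℝ) ≤ (r : ℝ) ^ (1 / p) := Real.rpow_nonneg (Nat.cast_nonneg r) _
  have hc1 : (r : ℝ) ^ (1/p) * (2 * cS * (F.b - G.a))
      ≤ (r : ℝ) ^ (1/p) * (2 * cS * (F.b - F.a)) := by
    apply mul_le_mul_of_nonneg_left _ hrp
    apply mul_le_mul_of_nonneg_left _ (by positivity)
    linarith
  have hc2 : (r : ℝ) ^ (1/p) * (2 * cS * (F.b - G.a))
      ≤ (r : ℝ) ^ (1/p) * (2 * cS * (H.b - G.a)) := by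
    apply mul_le_mul_of_nonneg_left _ hrp
    apply mul_le_mul_of_nonneg_left _ (by positivity)
    linarith
  -- temporal part triangle
  have htime : (r : ℝ) ^ (1/p) * (cS * (|F.a - G.a| + |F.b - G.b|))
      ≤ (r : ℝ) ^ (1/p) * (cS * (|F.a - H.a| + |F.b - H.b|))
        + (r : ℝ) ^ (1/p) * (cS * (|H.a - G.a| + |H.b - G.b|)) := by
    rw [← mul_add, ← mul_add]
    apply mul_le_mul_of_nonneg_left _ hrp
    have t1 : |F.a - G.a| ≤ |F.a - H.a| + |H.a - G.a| := abs_sub_le _ _ _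
    have t2 : |F.b - G.b| ≤ |F.b - H.b| + |H.b - G.b| := abs_sub_le _ _ _
    nlinarith [hcS.le]
  -- nonnegativity of cutoffs
  have hC1 : (0:ℝ) ≤ (r : ℝ) ^ (1/p) * (2 * cS * (F.b - G.a)) :=
    mul_nonneg hrp (mul_nonneg (by positivity) (sub_nonneg.mpr hGaFb))
  have hC2 : (0:ℝ) ≤ (r : ℝ) ^ (1/p) * (2 * cS * (F.b - F.a)) :=
    mul_nonneg hrp (mul_nonneg (by positivity) (sub_nonneg.mpr F.hab))
  have hC3 : (0:ℝ) ≤ (r : ℝ) ^ (1/p) * (2 * cS * (H.b - G.a)) :=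
    mul_nonneg hrp (mul_nonneg (by positivity) (sub_nonneg.mpr hGaHb))
  -- combine
  apply two_lp hp (by positivity)
    (le_min (segDist_nonneg hGaFb _ _) hC1)
    (by positivity)
    (le_min (segDist_nonneg F.hab _ _) hC2)
    (by positivity)
    (le_min (segDist_nonneg hGaHb _ _) hC3)
    htime
  exact min_add_min (segDist_nonneg F.hab _ _) hC2
    (segDist_nonneg hGaHb _ _) hC3 hseg
    hc1 hc2
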